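/- Let n, s, r be natural numbers such that r ≤ n - s (termination with s absent players) and such that for all disjoint sets A, B of players with |A| + |B| ≤ n - s, not both |A| + s ≥ r and |B| + s ≥ r hold (agreement despite s Byzantine players). Then 2r > n + s. -/
import Mathlib

/-- if `r ≤ n - s` and no two disjoint groups with
`a + b ≤ n - s` can both reach the threshold `r` with the help of the `s`
Byzantine players, then `2r > n + s`. -/
theorem stmt_3 (n s r : ℕ) (hs : s ≤ n) (hr : r ≤ n - s)
    (hagree : ∀ a b : ℕ, a + b ≤ n - s → ¬ (a + s ≥ r ∧ b + s ≥ r)) :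
    2 * r > n + s := by
  by_contra h
  exact hagree (r - s) (n - s - (r - s)) (by omega) ⟨by omega, by omega⟩
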